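/- arXiv:1106.6002 — 3 statements merged into one kernel-verified Lean document; each statement's English description precedes it below -/
import Mathlib

section
/- Let ξ_n > 0 and η_n > 0 be sequences with ξ_n η_n → 0 and n^{1/2} η_n → e, where 0 ≤ e < ∞. Suppose θ_n ∈ ℝ and σ_n ∈ (0,∞) are sequences such that n^{1/2} θ_n/(σ_n ξ_n) → ν in the extended real line. Then p_n(θ_n, σ_n) → Φ(−ν + e) − Φ(−ν − e) as n → ∞. -/
open MeasureTheory ProbabilityTheory Filter Set

/-- Standard normal cdf. -/
noncomputable def Phi (x : ℝ) : ℝ :=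
  ∫ t in Iic x, (Real.sqrt (2 * Real.pi))⁻¹ * Real.exp (-t ^ 2 / 2)

/-- Standard normal pdf. -/
noncomputable def stdPhi (t : ℝ) : ℝ :=
  (Real.sqrt (2 * Real.pi))⁻¹ * Real.exp (-t ^ 2 / 2)

/-- Extension of `Phi` to the extended reals, with `PhiE ⊤ = 1` and `PhiE ⊥ = 0`. -/
noncomputable def PhiE (z : EReal) : ℝ :=
  if z = ⊤ then 1 else if z = ⊥ then 0 else Phi z.toReal

/-- Density of `m^{-1/2}` times the square root of a chi-square with `m` degrees of freedom. -/
noncomputable def rho (m : ℕ) (s : ℝ) : ℝ :=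
  if 0 < s then
    (2 : ℝ) ^ ((1 : ℝ) - (m : ℝ) / 2) * (Real.Gamma ((m : ℝ) / 2))⁻¹ * Real.sqrt m *
      ((m : ℝ) * s ^ 2) ^ (((m : ℝ) - 1) / 2) * Real.exp (-(m : ℝ) * s ^ 2 / 2)
  else 0

/-- Known-variance variable deletion probability. -/
noncomputable def pdel (n : ℕ) (ξ η θ σ : ℝ) : ℝ :=
  Phi (Real.sqrt n * (-θ / (σ * ξ) + η)) - Phi (Real.sqrt n * (-θ / (σ * ξ) - η))

/-! With `A n = √n θ n / (σ n ξ n)` and `B n = √n η n` we have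
`p_n = Φ(-A n + B n) - Φ(-A n - B n)`. Since the limit `e` of `B n` is finite, `-A n ± B n`
converges to `-ν ± e` in the extended reals, and `Φ`, being continuous with limits `0` and `1`
at `∓∞`, turns convergence in the extended reals into convergence to the values of `PhiE`. -/

lemma integrable_stdPhi : Integrable stdPhi := by
  have h : stdPhi = fun t => (Real.sqrt (2 * Real.pi))⁻¹ * Real.exp (-(1 / 2) * t ^ 2) := by
    funext t
    simp only [stdPhi]
    ring_nf
  rw [h]
  exact (integrable_exp_neg_mul_sq (by norm_num)).const_mul _

lemma integral_stdPhi : ∫ t, stdPhi t = 1 := by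
  have h2pi : Real.sqrt (2 * Real.pi) ≠ 0 := by positivity
  calc ∫ t, stdPhi t
        = (Real.sqrt (2 * Real.pi))⁻¹ * ∫ t : ℝ, Real.exp (-(1 / 2) * t ^ 2) := by
        rw [← integral_const_mul]
        congr 1 with t
        simp only [stdPhi]
        ring_nf
    _ = 1 := by
        rw [integral_gaussian, show Real.pi / (1 / 2) = 2 * Real.pi by ring, inv_mul_cancel₀ h2pi]

lemma Phi_eq_setIntegral (x : ℝ) : Phi x = ∫ t in Iic x, stdPhi t := rfl

lemma continuous_Phi : Continuous Phi := by
  have h : Phi = fun x => Phi 0 + ∫ t in (0 : ℝ)..x, stdPhi t := by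
    funext x
    have := intervalIntegral.integral_Iic_sub_Iic
      (integrable_stdPhi.integrableOn (s := Iic 0)) (integrable_stdPhi.integrableOn (s := Iic x))
    rw [Phi_eq_setIntegral, Phi_eq_setIntegral]
    linarith
  rw [h]
  exact continuous_const.add (integrable_stdPhi.continuous_primitive 0)

lemma Phi_neg (x : ℝ) : Phi (-x) = 1 - Phi x := by
  have hcompl := integral_add_compl (measurableSet_Iic (a := x)) integrable_stdPhi
  rw [compl_Iic, integral_stdPhi] at hcompl
  have hreflect : ∫ t in Ioi x, stdPhi t = ∫ t in Iic (-x), stdPhi t := by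
    rw [← integral_comp_neg_Ioi]
    congr 1 with t
    simp [stdPhi]
  rw [Phi_eq_setIntegral, Phi_eq_setIntegral, ← hreflect]
  linarith

lemma tendsto_Phi_atTop : Tendsto Phi atTop (nhds 1) := by
  have h := tendsto_setIntegral_of_monotone (μ := volume) (f := stdPhi)
    (fun _ => measurableSet_Iic)
    (fun _ _ hab => Iic_subset_Iic.2 hab) (by rw [iUnion_Iic]; exact integrable_stdPhi.integrableOn)
  simpa only [iUnion_Iic, Measure.restrict_univ, integral_stdPhi, ← Phi_eq_setIntegral] using h

lemma tendsto_Phi_atBot : Tendsto Phi atBot (nhds 0) := by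
  have h : Tendsto (fun x => 1 - Phi (-x)) atBot (nhds (1 - 1)) :=
    tendsto_const_nhds.sub (tendsto_Phi_atTop.comp tendsto_neg_atBot_atTop)
  simpa only [Phi_neg, sub_sub_cancel, sub_self] using h

lemma tendsto_Phi_of_tendsto_coe {α : Type*} {l : Filter α} {u : α → ℝ} {ν : EReal}
    (hu : Tendsto (fun a => (u a : EReal)) l (nhds ν)) :
    Tendsto (fun a => Phi (u a)) l (nhds (PhiE ν)) := by
  induction ν using EReal.rec with
  | bot =>
    simpa [PhiE, Function.comp_def] using
      tendsto_Phi_atBot.comp (EReal.tendsto_coe_nhds_bot_iff.mp hu)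
  | top =>
    simpa [PhiE, Function.comp_def] using
      tendsto_Phi_atTop.comp (EReal.tendsto_coe_nhds_top_iff.mp hu)
  | coe x =>
    simpa [PhiE, Function.comp_def] using (continuous_Phi.tendsto x).comp (EReal.tendsto_coe.mp hu)

lemma EReal.tendsto_coe_add {α : Type*} {l : Filter α} {u v : α → ℝ} {a : EReal} {r : ℝ}
    (hu : Tendsto (fun x => (u x : EReal)) l (nhds a)) (hv : Tendsto v l (nhds r)) :
    Tendsto (fun x => ((u x + v x : ℝ) : EReal)) l (nhds (a + r)) := by
  have hadd := EReal.continuousAt_add (p := (a, (r : EReal)))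
    (Or.inr (EReal.coe_ne_bot r)) (Or.inr (EReal.coe_ne_top r))
  simpa only [EReal.coe_add, Function.comp_def] using
    hadd.tendsto.comp (hu.prodMk_nhds ((continuous_coe_real_ereal.tendsto r).comp hv))

theorem stmt_1_general (ξ η : ℕ → ℝ)
    (e : ℝ)
    (hne : Tendsto (fun n : ℕ => Real.sqrt n * η n) atTop (nhds e))
    (θ σ : ℕ → ℝ)
    (ν : EReal)
    (hν : Tendsto (fun n : ℕ => ((Real.sqrt n * θ n / (σ n * ξ n) : ℝ) : EReal)) atTop (nhds ν)) :
    Tendsto (fun n : ℕ => pdel n (ξ n) (η n) (θ n) (σ n)) atTop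
      (nhds (PhiE (-ν + (e : EReal)) - PhiE (-ν - (e : EReal)))) := by
  set A : ℕ → ℝ := fun n => Real.sqrt n * θ n / (σ n * ξ n)
  set B : ℕ → ℝ := fun n => Real.sqrt n * η n
  have hpdel : ∀ n,
      pdel n (ξ n) (η n) (θ n) (σ n) = Phi (-A n + B n) - Phi (-A n + -B n) := by
    intro n
    simp only [pdel, A, B]
    ring_nf
  have hnegA : Tendsto (fun n => ((-A n : ℝ) : EReal)) atTop (nhds (-ν)) := by
    simpa only [EReal.coe_neg, Function.comp_def] using (continuous_neg.tendsto ν).comp hν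
  rw [sub_eq_add_neg (-ν), ← EReal.coe_neg]
  simp_rw [hpdel]
  exact (tendsto_Phi_of_tendsto_coe (EReal.tendsto_coe_add hnegA hne)).sub
    (tendsto_Phi_of_tendsto_coe (EReal.tendsto_coe_add hnegA hne.neg))

/-- conservative tuning, moving-parameter limit of the deletion probability. -/
theorem stmt_1 (ξ η : ℕ → ℝ) (hξ : ∀ n, 0 < ξ n) (hη : ∀ n, 0 < η n)
    (hxe : Tendsto (fun n : ℕ => ξ n * η n) atTop (nhds 0))
    (e : ℝ) (he : 0 ≤ e)
    (hne : Tendsto (fun n : ℕ => Real.sqrt n * η n) atTop (nhds e))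
    (θ σ : ℕ → ℝ) (hσ : ∀ n, 0 < σ n)
    (ν : EReal)
    (hν : Tendsto (fun n : ℕ => ((Real.sqrt n * θ n / (σ n * ξ n) : ℝ) : EReal)) atTop (nhds ν)) :
    Tendsto (fun n : ℕ => pdel n (ξ n) (η n) (θ n) (σ n)) atTop
      (nhds (PhiE (-ν + (e : EReal)) - PhiE (-ν - (e : EReal)))) :=
  stmt_1_general ξ η e hne θ σ ν hν
end

section
/- Let ξ_n > 0 and η_n > 0 be sequences with ξ_n η_n → 0 and ξ_n/n^{1/2} → 0, and let k_n be integers with 1 ≤ k_n < n. For each n, θ ∈ ℝ and σ > 0, build the feasible estimators θ̃_H, θ̃_S, θ̃_AS from Z with law N(θ, σ²ξ_n²/n), S independent of Z with density ρ_{n−k_n}, threshold parameters ξ = ξ_n and η = η_n. Set a_n = min(n^{1/2}/ξ_n, (ξ_n η_n)^{−1}). Then each of the three estimators θ̃ ∈ {θ̃_H, θ̃_S, θ̃_AS} is uniformly a_n-consistent: for every ε > 0 there exists a real number M > 0 such that sup_{n} sup_{θ ∈ ℝ} sup_{0 < σ < ∞} P(a_n |θ̃ − θ| > σ M) < ε.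 -/
open MeasureTheory ProbabilityTheory Filter Set

/-- Joint law of the least-squares coordinate `Z ~ N(θ, σ²ξ²/n)` and the independent
variance-estimator ratio `S` with density `rho m`. -/
noncomputable def jointMeas (n m : ℕ) (ξ θ σ : ℝ) : Measure (ℝ × ℝ) :=
  (gaussianReal θ (Real.toNNReal (σ ^ 2 * ξ ^ 2 / n))).prod
    (volume.withDensity fun s => ENNReal.ofReal (rho m s))

/-- Feasible hard-thresholding estimator `Z · 1(|Z| > σSξη)`. -/
noncomputable def hardF (σ ξ η : ℝ) (p : ℝ × ℝ) : ℝ :=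
  if σ * p.2 * ξ * η < |p.1| then p.1 else 0

/-- Feasible soft-thresholding estimator `sign(Z)(|Z| − σSξη)₊`. -/
noncomputable def softF (σ ξ η : ℝ) (p : ℝ × ℝ) : ℝ :=
  Real.sign p.1 * max (|p.1| - σ * p.2 * ξ * η) 0

/-- Feasible adaptive soft-thresholding estimator `Z(1 − σ²S²ξ²η²/Z²)₊`. -/
noncomputable def adaptF (σ ξ η : ℝ) (p : ℝ × ℝ) : ℝ :=
  if p.1 = 0 then 0 else p.1 * max (1 - (σ * p.2 * ξ * η) ^ 2 / p.1 ^ 2) 0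

/-! Each of the three estimators differs from `Z` by at most the threshold `σSξη`. Since
`a_n ≤ √n/ξ_n` and `a_n ≤ (ξ_n η_n)⁻¹`, the event `a_n |θ̃ - θ| > 2σr` forces
`|Z - θ| > r σξ_n/√n` or `S > r`. By Chebyshev's inequality, with `Var Z = σ²ξ_n²/n` and
`E S² = 1`, each of these has probability at most `1/r²`, whatever `n`, `θ` and `σ`. -/

section ScaledChi

variable {m : ℕ}

lemma rho_of_nonpos {s : ℝ} (hs : s ≤ 0) : rho m s = 0 := if_neg hs.not_gt

lemma rho_nonneg (m : ℕ) (s : ℝ) : 0 ≤ rho m s := by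
  unfold rho
  split_ifs
  · have := Real.Gamma_nonneg_of_nonneg (by positivity : (0 : ℝ) ≤ m / 2)
    positivity
  · exact le_rfl

lemma measurable_rho (m : ℕ) : Measurable (rho m) :=
  Measurable.ite measurableSet_Ioi (by fun_prop) measurable_const

lemma rho_zero : rho 0 = 0 := by
  ext s
  simp [rho]

lemma rho_of_pos (hm : 0 < m) {s : ℝ} (hs : 0 < s) :
    rho m s = 2 * ((m : ℝ) / 2) ^ ((m : ℝ) / 2) / Real.Gamma ((m : ℝ) / 2) *
      (s ^ ((m : ℝ) - 1) * Real.exp (-((m : ℝ) / 2) * s ^ (2 : ℝ))) := by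
  have hm' : (0 : ℝ) < m := by exact_mod_cast hm
  have hpow : ((m : ℝ) * s ^ 2) ^ (((m : ℝ) - 1) / 2) =
      (m : ℝ) ^ (((m : ℝ) - 1) / 2) * s ^ ((m : ℝ) - 1) := by
    rw [Real.mul_rpow hm'.le (by positivity), ← Real.rpow_natCast s 2, ← Real.rpow_mul hs.le]
    ring_nf
  have hconst : (2 : ℝ) ^ ((1 : ℝ) - m / 2) * Real.sqrt m * (m : ℝ) ^ (((m : ℝ) - 1) / 2) =
      2 * ((m : ℝ) / 2) ^ ((m : ℝ) / 2) := by
    rw [Real.div_rpow hm'.le zero_le_two, Real.sqrt_eq_rpow, Real.rpow_sub two_pos, Real.rpow_one,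
      mul_assoc, ← Real.rpow_add hm']
    field_simp
    ring_nf
  rw [rho, if_pos hs, hpow, Real.rpow_two, ← hconst]
  ring_nf

lemma rpow_mul_rho_eqOn (hm : 0 < m) (j : ℝ) :
    EqOn (fun s => s ^ j * rho m s)
      (fun s => 2 * ((m : ℝ) / 2) ^ ((m : ℝ) / 2) / Real.Gamma ((m : ℝ) / 2) *
        (s ^ ((m : ℝ) - 1 + j) * Real.exp (-((m : ℝ) / 2) * s ^ (2 : ℝ)))) (Ioi 0) := by
  intro s hs
  simp only
  rw [rho_of_pos hm hs, Real.rpow_add hs]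
  ring

lemma integrableOn_rpow_mul_rho (hm : 0 < m) {j : ℝ} (hj : -(m : ℝ) < j) :
    IntegrableOn (fun s => s ^ j * rho m s) (Ioi 0) :=
  IntegrableOn.congr_fun
    ((integrableOn_rpow_mul_exp_neg_mul_rpow (s := (m : ℝ) - 1 + j) (by linarith) two_pos
      (by positivity : (0 : ℝ) < m / 2)).const_mul _)
    (rpow_mul_rho_eqOn hm j).symm measurableSet_Ioi

lemma setIntegral_rpow_mul_rho (hm : 0 < m) {j : ℝ} (hj : -(m : ℝ) < j) :
    ∫ s in Ioi 0, s ^ j * rho m s = ((m : ℝ) / 2) ^ (-j / 2) *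
      Real.Gamma (((m : ℝ) + j) / 2) / Real.Gamma ((m : ℝ) / 2) := by
  have hm' : (0 : ℝ) < m / 2 := by positivity
  rw [setIntegral_congr_fun measurableSet_Ioi (rpow_mul_rho_eqOn hm j), integral_const_mul,
    integral_rpow_mul_exp_neg_mul_rpow two_pos (by linarith) hm',
    show -((m : ℝ) - 1 + j + 1) / 2 = -((m : ℝ) / 2) + -j / 2 by ring,
    show ((m : ℝ) - 1 + j + 1) / 2 = ((m : ℝ) + j) / 2 by ring, Real.rpow_add hm',
    Real.rpow_neg hm'.le]
  have := (Real.Gamma_pos_of_pos hm').ne'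
  have := (Real.rpow_pos_of_pos hm' ((m : ℝ) / 2)).ne'
  field_simp

noncomputable def scaledChi (m : ℕ) : Measure ℝ :=
  volume.withDensity fun s => ENNReal.ofReal (rho m s)

instance (m : ℕ) : SFinite (scaledChi m) := by
  unfold scaledChi
  infer_instance

lemma scaledChi_zero : scaledChi 0 = 0 := by
  simp [scaledChi, rho_zero]

lemma lintegral_rpow_scaledChi (hm : 0 < m) {j : ℝ} (hj : -(m : ℝ) < j) :
    ∫⁻ s, ENNReal.ofReal (s ^ j) ∂scaledChi m = ENNReal.ofReal (((m : ℝ) / 2) ^ (-j / 2) *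
      Real.Gamma (((m : ℝ) + j) / 2) / Real.Gamma ((m : ℝ) / 2)) := by
  have hsupp : (fun s => ENNReal.ofReal (s ^ j * rho m s)).support ⊆ Ioi 0 := fun s hs => by
    by_contra h
    exact hs (by simp [rho_of_nonpos (not_lt.mp h)])
  rw [scaledChi, lintegral_withDensity_eq_lintegral_mul _ (measurable_rho m).ennreal_ofReal
      (by fun_prop), ← setIntegral_rpow_mul_rho hm hj,
    ofReal_integral_eq_lintegral_ofReal (integrableOn_rpow_mul_rho hm hj)
      ((ae_restrict_iff' measurableSet_Ioi).2 (ae_of_all _ fun s hs =>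
        mul_nonneg (Real.rpow_nonneg (le_of_lt hs) j) (rho_nonneg m s))),
    setLIntegral_eq_of_support_subset hsupp]
  refine lintegral_congr fun s => ?_
  rw [Pi.mul_apply, ← ENNReal.ofReal_mul (rho_nonneg m s), mul_comm]

lemma scaledChi_univ_le (m : ℕ) : scaledChi m univ ≤ 1 := by
  rcases m.eq_zero_or_pos with rfl | hm
  · simp [scaledChi_zero]
  have h := lintegral_rpow_scaledChi hm (j := 0) (by simpa using hm)
  simp only [Real.rpow_zero, ENNReal.ofReal_one, lintegral_const, one_mul, neg_zero, zero_div,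
    add_zero] at h
  rw [h]
  have := (Real.Gamma_pos_of_pos (by positivity : (0 : ℝ) < m / 2)).ne'
  simp [this]

lemma lintegral_sq_scaledChi_le (m : ℕ) :
    ∫⁻ s, ENNReal.ofReal (s ^ 2) ∂scaledChi m ≤ 1 := by
  rcases m.eq_zero_or_pos with rfl | hm
  · simp [scaledChi_zero]
  have h := lintegral_rpow_scaledChi hm (j := 2) (by linarith [m.cast_nonneg (α := ℝ)])
  simp only [Real.rpow_two] at h
  have hm' : (0 : ℝ) < m / 2 := by positivity
  rw [h, show ((m : ℝ) + 2) / 2 = m / 2 + 1 by ring, Real.Gamma_add_one hm'.ne',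
    show -(2 : ℝ) / 2 = -1 by norm_num, Real.rpow_neg_one]
  have := (Real.Gamma_pos_of_pos hm').ne'
  field_simp
  simp

end ScaledChi

lemma measure_lt_abs_le_lintegral_sq_div (μ : Measure ℝ) {r : ℝ} (hr : 0 < r) :
    μ {s | r < |s|} ≤ (∫⁻ s, ENNReal.ofReal (s ^ 2) ∂μ) / ENNReal.ofReal (r ^ 2) := by
  refine le_trans (measure_mono fun s (hs : r < |s|) => ?_)
    (meas_ge_le_lintegral_div (by fun_prop) (by positivity) ENNReal.ofReal_ne_top)
  show ENNReal.ofReal (r ^ 2) ≤ ENNReal.ofReal (s ^ 2)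
  exact ENNReal.ofReal_le_ofReal (by nlinarith [sq_abs s, abs_nonneg s])

lemma scaledChi_lt_abs_le (m : ℕ) {r : ℝ} (hr : 0 < r) :
    scaledChi m {s | r < |s|} ≤ ENNReal.ofReal (1 / r ^ 2) := by
  rw [ENNReal.ofReal_div_of_pos (by positivity), ENNReal.ofReal_one]
  exact (measure_lt_abs_le_lintegral_sq_div _ hr).trans
    (ENNReal.div_le_div_right (lintegral_sq_scaledChi_le m) _)

lemma gaussianReal_lt_abs_sub_le (θ : ℝ) {c r : ℝ} (hc : 0 ≤ c) (hr : 0 < r) :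
    gaussianReal θ (c ^ 2).toNNReal {x | c * r < |x - θ|} ≤ ENNReal.ofReal (1 / r ^ 2) := by
  rcases hc.eq_or_lt with rfl | hc
  · simp [gaussianReal_zero_var]
  calc gaussianReal θ (c ^ 2).toNNReal {x | c * r < |x - θ|}
      ≤ gaussianReal θ (c ^ 2).toNNReal
          {x | c * r ≤ |id x - ∫ y, id y ∂gaussianReal θ (c ^ 2).toNNReal|} :=
        measure_mono fun x (hx : c * r < |x - θ|) => by
          simpa [integral_id_gaussianReal] using hx.le
    _ ≤ ENNReal.ofReal (Var[id; gaussianReal θ (c ^ 2).toNNReal] / (c * r) ^ 2) :=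
        meas_ge_le_variance_div_sq (memLp_id_gaussianReal 2) (by positivity)
    _ = ENNReal.ofReal (1 / r ^ 2) := by
        rw [variance_id_gaussianReal, Real.coe_toNNReal _ (sq_nonneg c)]
        congr 1
        field_simp

lemma MeasureTheory.Measure.prod_fst_mem_or_snd_mem_le {α β : Type*} [MeasurableSpace α]
    [MeasurableSpace β]
    (μ : Measure α) [IsProbabilityMeasure μ] {ν : Measure β} [SFinite ν] (hν : ν univ ≤ 1)
    (A : Set α) (B : Set β) : μ.prod ν {p | p.1 ∈ A ∨ p.2 ∈ B} ≤ μ A + ν B := by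
  have hAB : {p : α × β | p.1 ∈ A ∨ p.2 ∈ B} = A ×ˢ univ ∪ univ ×ˢ B := by
    ext p
    simp
  calc μ.prod ν {p | p.1 ∈ A ∨ p.2 ∈ B}
      ≤ μ A * ν univ + μ univ * ν B := by
        rw [hAB, ← Measure.prod_prod, ← Measure.prod_prod]
        exact measure_union_le _ _
    _ ≤ μ A + ν B := by
        rw [measure_univ (μ := μ), one_mul]
        gcongr
        exact mul_le_of_le_one_right' hν

section Thresholding

variable (σ ξ η : ℝ) (p : ℝ × ℝ)

lemma abs_hardF_sub_le : |hardF σ ξ η p - p.1| ≤ |σ * p.2 * ξ * η| := by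
  unfold hardF
  split_ifs with h
  · simp only [sub_self, abs_zero]
    exact abs_nonneg _
  · simpa using (not_lt.mp h).trans (le_abs_self _)

lemma abs_softF_sub_le : |softF σ ξ η p - p.1| ≤ |σ * p.2 * ξ * η| := by
  unfold softF
  set τ := σ * p.2 * ξ * η
  rw [abs_le]
  have := le_abs_self τ
  have := neg_abs_le τ
  rcases lt_trichotomy p.1 0 with h | h | h
  · rw [Real.sign_of_neg h, abs_of_neg h]
    constructor <;> cases max_cases (-p.1 - τ) 0 <;> linarith
  · simp [h]
  · rw [Real.sign_of_pos h, abs_of_pos h]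
    constructor <;> cases max_cases (p.1 - τ) 0 <;> linarith

lemma abs_adaptF_sub_le : |adaptF σ ξ η p - p.1| ≤ |σ * p.2 * ξ * η| := by
  unfold adaptF
  set τ := σ * p.2 * ξ * η
  split_ifs with hz
  · simp [hz]
  have hz2 : 0 < p.1 ^ 2 := by positivity
  rcases le_total (τ ^ 2) (p.1 ^ 2) with hle | hle
  · have hτz : |τ| ≤ |p.1| := sq_le_sq.mp hle
    rw [max_eq_left (by rw [sub_nonneg, div_le_one hz2]; exact hle),
      show p.1 * (1 - τ ^ 2 / p.1 ^ 2) - p.1 = -(τ ^ 2 / p.1) by field_simp; ring,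
      abs_neg, abs_div, abs_pow, div_le_iff₀ (abs_pos.mpr hz), sq]
    exact mul_le_mul_of_nonneg_left hτz (abs_nonneg τ)
  · rw [max_eq_right (by rw [sub_nonpos, one_le_div hz2]; exact hle), mul_zero, zero_sub,
      abs_neg]
    exact sq_le_sq.mp hle

end Thresholding

lemma abs_thresholding_sub_le {T : ℝ → ℝ → ℝ → ℝ × ℝ → ℝ}
    (hT : T = hardF ∨ T = softF ∨ T = adaptF) (σ ξ η : ℝ) (p : ℝ × ℝ) :
    |T σ ξ η p - p.1| ≤ |σ * p.2 * ξ * η| := by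
  rcases hT with rfl | rfl | rfl
  · exact abs_hardF_sub_le σ ξ η p
  · exact abs_softF_sub_le σ ξ η p
  · exact abs_adaptF_sub_le σ ξ η p

lemma lt_abs_sub_or_lt_abs {a c σ l r z s t θ : ℝ} (ha : 0 ≤ a) (hac : a * c ≤ σ)
    (hal : a * l ≤ 1) (hσ : 0 < σ) (hr : 0 ≤ r) (hdev : |t - z| ≤ σ * |s| * l)
    (h : σ * (2 * r) < a * |t - θ|) : c * r < |z - θ| ∨ r < |s| := by
  by_contra! hcon
  have hs : σ * |s| * (a * l) ≤ σ * r := by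
    nlinarith [mul_nonneg hσ.le (abs_nonneg s)]
  have hz : a * |z - θ| ≤ σ * r := by
    nlinarith [mul_le_mul_of_nonneg_left hcon.1 ha]
  have := abs_sub_le t z θ
  nlinarith [mul_le_mul_of_nonneg_left (this.trans (add_le_add_left hdev _)) ha]

lemma thresholding_event_subset {T : ℝ → ℝ → ℝ → ℝ × ℝ → ℝ}
    (hT : T = hardF ∨ T = softF ∨ T = adaptF) (n : ℕ) {ξ η σ : ℝ} (θ : ℝ) {r : ℝ}
    (hξ : 0 < ξ) (hη : 0 < η) (hσ : 0 < σ) (hr : 0 ≤ r) :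
    {p : ℝ × ℝ | σ * (2 * r) < min (Real.sqrt n / ξ) ((ξ * η)⁻¹) * |T σ ξ η p - θ|}
      ⊆ {p | p.1 ∈ {x | σ * ξ / Real.sqrt n * r < |x - θ|} ∨ p.2 ∈ {s | r < |s|}} := by
  refine fun p hp => lt_abs_sub_or_lt_abs (l := ξ * η) (by positivity) ?_ ?_ hσ hr ?_ hp
  · calc min (Real.sqrt n / ξ) ((ξ * η)⁻¹) * (σ * ξ / Real.sqrt n)
        ≤ Real.sqrt n / ξ * (σ * ξ / Real.sqrt n) := by gcongr; exact min_le_left _ _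
      _ = σ * (Real.sqrt n / Real.sqrt n) := by field_simp
      _ ≤ σ := mul_le_of_le_one_right hσ.le (div_self_le_one _)
  · calc min (Real.sqrt n / ξ) ((ξ * η)⁻¹) * (ξ * η)
        ≤ (ξ * η)⁻¹ * (ξ * η) := by gcongr; exact min_le_right _ _
      _ = 1 := inv_mul_cancel₀ (by positivity)
  · have := abs_thresholding_sub_le hT σ ξ η p
    rwa [abs_mul, abs_mul, abs_mul, abs_of_pos hσ, abs_of_pos hξ, abs_of_pos hη,
      mul_assoc _ ξ] at this

lemma jointMeas_fst_or_snd_le (n m : ℕ) {ξ σ : ℝ} (θ : ℝ) {r : ℝ} (hσξ : 0 ≤ σ * ξ)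
    (hr : 0 < r) :
    jointMeas n m ξ θ σ
        {p | p.1 ∈ {x | σ * ξ / Real.sqrt n * r < |x - θ|} ∨ p.2 ∈ {s | r < |s|}}
      ≤ ENNReal.ofReal (1 / r ^ 2) + ENNReal.ofReal (1 / r ^ 2) := by
  -- for `n = 0` both sides are `0`, as `x / 0 = 0` and `√0 = 0`
  have hvar : (σ ^ 2 * ξ ^ 2 / n).toNNReal = ((σ * ξ / Real.sqrt n) ^ 2).toNNReal := by
    rw [div_pow, mul_pow, Real.sq_sqrt n.cast_nonneg]
  rw [jointMeas, hvar]
  exact (Measure.prod_fst_mem_or_snd_mem_le _ (scaledChi_univ_le m) _ _).trans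
    (add_le_add (gaussianReal_lt_abs_sub_le θ (by positivity) hr) (scaledChi_lt_abs_le m hr))

theorem stmt_8_general (ξ η : ℕ → ℝ) (hξ : ∀ n, 0 < ξ n) (hη : ∀ n, 0 < η n)
    (k : ℕ → ℕ)
    (T : ℝ → ℝ → ℝ → ℝ × ℝ → ℝ) (hT : T = hardF ∨ T = softF ∨ T = adaptF) :
    ∀ ε > (0 : ℝ), ∃ M > (0 : ℝ), ∀ (n : ℕ) (θ σ : ℝ), 0 < σ →
      jointMeas n (n - k n) (ξ n) θ σ
          {p : ℝ × ℝ |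
            σ * M < min (Real.sqrt n / ξ n) ((ξ n * η n)⁻¹) * |T σ (ξ n) (η n) p - θ|}
        < ENNReal.ofReal ε := by
  intro ε hε
  -- each of the two Chebyshev bounds `1 / r ^ 2` is then `ε / 3`
  set r := Real.sqrt (3 / ε)
  have hr : 0 < r := by positivity
  have htail : 1 / r ^ 2 = ε / 3 := by rw [Real.sq_sqrt (by positivity), one_div_div]
  refine ⟨2 * r, by positivity, fun n θ σ hσ => ?_⟩
  calc jointMeas n (n - k n) (ξ n) θ σ _
      ≤ ENNReal.ofReal (1 / r ^ 2) + ENNReal.ofReal (1 / r ^ 2) :=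
        (measure_mono (thresholding_event_subset hT n θ (hξ n) (hη n) hσ hr.le)).trans
          (jointMeas_fst_or_snd_le n _ θ (mul_pos hσ (hξ n)).le hr)
    _ < ENNReal.ofReal ε := by
        rw [htail, ← ENNReal.ofReal_add (by positivity) (by positivity)]
        exact (ENNReal.ofReal_lt_ofReal_iff hε).2 (by linarith)

/-- uniform `a_n`-consistency of the feasible thresholding estimators. -/
theorem stmt_8 (ξ η : ℕ → ℝ) (hξ : ∀ n, 0 < ξ n) (hη : ∀ n, 0 < η n)
    (hxe : Tendsto (fun n : ℕ => ξ n * η n) atTop (nhds 0))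
    (hxn : Tendsto (fun n : ℕ => ξ n / Real.sqrt n) atTop (nhds 0))
    (k : ℕ → ℕ) (hk : ∀ n, 2 ≤ n → 1 ≤ k n ∧ k n < n)
    (T : ℝ → ℝ → ℝ → ℝ × ℝ → ℝ) (hT : T = hardF ∨ T = softF ∨ T = adaptF) :
    ∀ ε > (0 : ℝ), ∃ M > (0 : ℝ), ∀ (n : ℕ) (θ σ : ℝ), 0 < σ →
      jointMeas n (n - k n) (ξ n) θ σ
          {p : ℝ × ℝ |
            σ * M < min (Real.sqrt n / ξ n) ((ξ n * η n)⁻¹) * |T σ (ξ n) (η n) p - θ|}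
        < ENNReal.ofReal ε :=
  stmt_8_general ξ η hξ hη k T hT
end

section
/- Fix n ≥ 1, θ ∈ ℝ, σ > 0, ξ > 0, η > 0 and a scaling factor α > 0. Let Z be a real random variable with Gaussian law N(θ, σ²ξ²/n) and let θ̂_S = sign(Z)(|Z| − σξη)_+ be the soft-thresholding estimator, where (·)_+ = max(·, 0). Then for every x ∈ ℝ, P(σ^{−1}α(θ̂_S − θ) ≤ x) = Φ(n^{1/2} x/(α ξ) + n^{1/2} η)·1(x/α + θ/σ ≥ 0) + Φ(n^{1/2} x/(α ξ) − n^{1/2} η)·1(x/α + θ/σ < 0). -/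
open MeasureTheory ProbabilityTheory Filter Set
open scoped NNReal

/-! Soft thresholding at level `λ ≥ 0` is nondecreasing, continuous and vanishes exactly on
`[-λ, λ]`, so its sublevel set at height `c` is the half-line `(-∞, c + λ]` when `c ≥ 0` and
`(-∞, c - λ]` when `c < 0`. The probability is therefore the Gaussian cdf at that endpoint,
and standardising `N(θ, σ²ξ²/n)` gives the two `Φ` terms. -/

lemma gaussianReal_zero_one_Iic_toReal (a : ℝ) :
    (gaussianReal 0 1 (Iic a)).toReal = Phi a := by
  rw [gaussianReal_apply_eq_integral 0 one_ne_zero,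
    ENNReal.toReal_ofReal (setIntegral_nonneg measurableSet_Iic
      fun y _ => gaussianPDFReal_nonneg _ _ _)]
  unfold Phi gaussianPDFReal
  norm_num

lemma gaussianReal_Iic_toReal (μ : ℝ) {v : ℝ≥0} (hv : v ≠ 0) (t : ℝ) :
    (gaussianReal μ v (Iic t)).toReal = Phi ((t - μ) / Real.sqrt v) := by
  have hsqrt : 0 < Real.sqrt v := Real.sqrt_pos.mpr (NNReal.coe_pos.mpr hv.bot_lt)
  have hmap : gaussianReal μ v
      = ((gaussianReal 0 1).map (Real.sqrt v * ·)).map (· + μ) := by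
    rw [gaussianReal_map_const_mul, gaussianReal_map_add_const]
    congr 1
    · ring
    · ext
      simp [Real.sq_sqrt (NNReal.coe_nonneg v)]
  rw [hmap, Measure.map_apply (measurable_add_const μ) measurableSet_Iic,
    preimage_add_const_Iic, Measure.map_apply (measurable_const_mul _) measurableSet_Iic,
    preimage_const_mul_Iic₀ _ hsqrt, gaussianReal_zero_one_Iic_toReal]

noncomputable def softThreshold (lam z : ℝ) : ℝ :=
  Real.sign z * max (|z| - lam) 0

lemma softThreshold_le_iff {lam : ℝ} (hlam : 0 ≤ lam) (z c : ℝ) :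
    softThreshold lam z ≤ c ↔ z ≤ if 0 ≤ c then c + lam else c - lam := by
  unfold softThreshold
  rcases lt_trichotomy z 0 with hz | rfl | hz
  · rw [Real.sign_of_neg hz, abs_of_neg hz]
    rcases le_or_gt (-z) lam with h | h
    · rw [max_eq_right (by linarith)]
      split_ifs <;> constructor <;> intro <;> linarith
    · rw [max_eq_left (by linarith)]
      split_ifs <;> constructor <;> intro <;> linarith
  · simp only [Real.sign_zero, zero_mul]
    split_ifs <;> constructor <;> intro <;> linarith
  · rw [Real.sign_of_pos hz, abs_of_pos hz, one_mul]
    rcases le_or_gt z lam with h | h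
    · rw [max_eq_right (by linarith)]
      split_ifs <;> constructor <;> intro <;> linarith
    · rw [max_eq_left (by linarith)]
      split_ifs <;> constructor <;> intro <;> linarith

lemma gaussianReal_softThreshold_le_toReal (μ : ℝ) {v : ℝ≥0} (hv : v ≠ 0) {lam : ℝ}
    (hlam : 0 ≤ lam) (c : ℝ) :
    (gaussianReal μ v {z | softThreshold lam z ≤ c}).toReal =
      Phi (((if 0 ≤ c then c + lam else c - lam) - μ) / Real.sqrt v) := by
  rw [← gaussianReal_Iic_toReal μ hv]
  congr 2
  ext z
  exact softThreshold_le_iff hlam z c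

/-- finite-sample cdf of the scaled and centered infeasible
soft-thresholding estimator. -/
theorem stmt_11 (n : ℕ) (hn : 1 ≤ n) (θ σ ξ η α : ℝ)
    (hσ : 0 < σ) (hξ : 0 < ξ) (hη : 0 < η) (hα : 0 < α) (x : ℝ) :
    (gaussianReal θ (Real.toNNReal (σ ^ 2 * ξ ^ 2 / n))
        {z : ℝ | σ⁻¹ * α * (Real.sign z * max (|z| - σ * ξ * η) 0 - θ) ≤ x}).toReal =
      Phi (Real.sqrt n * x / (α * ξ) + Real.sqrt n * η) *
          (if 0 ≤ x / α + θ / σ then 1 else 0)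
        + Phi (Real.sqrt n * x / (α * ξ) - Real.sqrt n * η) *
          (if x / α + θ / σ < 0 then 1 else 0) := by
  have hn' : (0 : ℝ) < n := by exact_mod_cast hn
  have hv : Real.toNNReal (σ ^ 2 * ξ ^ 2 / n) ≠ 0 := by positivity
  have hsqrt_v : Real.sqrt (Real.toNNReal (σ ^ 2 * ξ ^ 2 / n)) = σ * ξ / Real.sqrt n := by
    rw [Real.coe_toNNReal _ (by positivity), Real.sqrt_div' _ hn'.le,
      Real.sqrt_mul' _ (sq_nonneg _), Real.sqrt_sq hσ.le, Real.sqrt_sq hξ.le]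
  have hset : {z : ℝ | σ⁻¹ * α * (Real.sign z * max (|z| - σ * ξ * η) 0 - θ) ≤ x}
      = {z | softThreshold (σ * ξ * η) z ≤ θ + σ * (x / α)} := by
    ext z
    change σ⁻¹ * α * (softThreshold _ z - θ) ≤ x ↔ softThreshold _ z ≤ _
    rw [← sub_le_iff_le_add', mul_comm, ← le_div_iff₀ (by positivity)]
    field_simp
  have hsign : 0 ≤ θ + σ * (x / α) ↔ 0 ≤ x / α + θ / σ := by
    rw [show θ + σ * (x / α) = σ * (x / α + θ / σ) by field_simp; ring]
    exact mul_nonneg_iff_of_pos_left hσ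
  rw [hset, gaussianReal_softThreshold_le_toReal θ hv (by positivity), hsqrt_v]
  by_cases h0 : 0 ≤ x / α + θ / σ
  · simp only [hsign.mpr h0, h0, if_true, not_lt.mpr h0, if_false, mul_one, mul_zero, add_zero]
    congr 1
    field_simp
    ring
  · simp only [hsign.not.mpr h0, h0, if_false, not_le.mp h0, if_true, mul_one, mul_zero, zero_add]
    congr 1
    field_simp
    ring
end
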